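/- Let T : X → X be a continuous transformation of a compact metric space and let (f_n) be a subadditive sequence of upper semi-continuous functions from X to ℝ ∪ {−∞}. Define β̃[(f_n)] := lim_{n→∞} sup_{x ∈ X} (1/n) f_n(x) (the limit exists in ℝ ∪ {−∞} by subadditivity). Then there exists z ∈ X such that inf_{m≥1} (1/m) f_m(z) ≥ β̃[(f_n)]; moreover the point z may be taken to be recurrent with respect to T. -/

import Mathlib

open MeasureTheory Filter Topology
open scoped ENNReal NNReal
open scoped Matrix.Norms.L2Operator

noncomputable section

/-- The shift map `σ` on one-sided sequences. -/
def shft {I : Type*} (x : ℕ → I) : ℕ → I := fun n => x (n + 1)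

/-- `coc A x n = A_{x (n-1)} ⋯ A_{x 1} A_{x 0}`, i.e. the matrix cocycle `L_A(x,n)`. -/
def coc {I : Type*} {d : ℕ} (A : I → Matrix (Fin d) (Fin d) ℂ) (x : ℕ → I) :
    ℕ → Matrix (Fin d) (Fin d) ℂ
  | 0 => 1
  | n + 1 => A (x n) * coc A x n

/-- The joint spectral radius of the family `A` (with respect to the operator norm induced by
the Euclidean norm).  By Fekete's subadditivity lemma, the limit defining the joint spectral
radius coincides with this infimum. -/
def jsr {I : Type*} {d : ℕ} (A : I → Matrix (Fin d) (Fin d) ℂ) : ℝ :=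
  ⨅ n : ℕ+, (⨆ x : ℕ → I, ‖coc A x (n : ℕ)‖) ^ (((n : ℕ) : ℝ)⁻¹)

/-- `log`, with values in `ℝ ∪ {-∞}`, following the convention `log 0 = -∞`. -/
def elog (r : ℝ) : EReal := if r ≤ 0 then ⊥ else ((Real.log r : ℝ) : EReal)

/-- The nonnegative part of an extended real number, as an extended nonnegative real. -/
def epos (x : EReal) : ℝ≥0∞ := if x = ⊤ then ⊤ else ENNReal.ofReal x.toReal

/-- Integral of a function with values in `ℝ ∪ {-∞}` (the value may be `-∞`). -/
def eInt {Y : Type*} [MeasurableSpace Y] (μ : Measure Y) (f : Y → EReal) : EReal :=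
  ((∫⁻ y, epos (f y) ∂μ : ℝ≥0∞) : EReal) - ((∫⁻ y, epos (-f y) ∂μ : ℝ≥0∞) : EReal)

/-- `(1/n)` as an extended real number. -/
def cE (n : ℕ) : EReal := (((n : ℝ)⁻¹ : ℝ) : EReal)

/-- The set `M_T` of `T`-invariant Borel probability measures. -/
def MTset {X : Type*} [MeasurableSpace X] (T : X → X) : Set (Measure X) :=
  {μ | IsProbabilityMeasure μ ∧ MeasurePreserving T μ μ}

/-- The set `M_σ` of shift-invariant Borel probability measures on `Σ_I = I^ℕ`. -/
def Minv (I : Type*) [MeasurableSpace I] : Set (Measure (ℕ → I)) :=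
  {μ | IsProbabilityMeasure μ ∧ MeasurePreserving shft μ μ}

/-- `(1/n) ∫ log N(L_A(x,n)) dμ(x)`, with values in `ℝ ∪ {-∞}`. -/
def avg {I : Type*} [MeasurableSpace I] {d : ℕ}
    (N : Matrix (Fin d) (Fin d) ℂ → ℝ) (A : I → Matrix (Fin d) (Fin d) ℂ)
    (μ : Measure (ℕ → I)) (n : ℕ) : EReal :=
  cE n * eInt μ (fun x => elog (N (coc A x n)))

/-- The set of maximising measures `M_max(A)` (defined via the Euclidean operator norm). -/
def Mmax {I : Type*} [MeasurableSpace I] {d : ℕ} (A : I → Matrix (Fin d) (Fin d) ℂ) :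
    Set (Measure (ℕ → I)) :=
  {μ | μ ∈ Minv I ∧ (⨅ n : ℕ+, avg (fun M => ‖M‖) A μ (n : ℕ)) = elog (jsr A)}

/-- The topological support of a measure. -/
def msupport {Y : Type*} [TopologicalSpace Y] [MeasurableSpace Y] (μ : Measure Y) : Set Y :=
  {y | ∀ U : Set Y, IsOpen U → y ∈ U → 0 < μ U}

/-- The Mather set `Z_A`. -/
def mather {I : Type*} [TopologicalSpace I] [MeasurableSpace I] {d : ℕ}
    (A : I → Matrix (Fin d) (Fin d) ℂ) : Set (ℕ → I) :=
  ⋃ μ ∈ Mmax A, msupport μ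

/-- `N` is a norm on the complex vector space `E`. -/
def IsNorm {E : Type*} [AddCommGroup E] [Module ℂ E] (N : E → ℝ) : Prop :=
  (∀ v, N v = 0 ↔ v = 0) ∧ (∀ (c : ℂ) (v : E), N (c • v) = ‖c‖ * N v) ∧
    ∀ v w, N (v + w) ≤ N v + N w

/-- The operator norm on `d × d` matrices induced by a norm `N` on `ℂ^d`. -/
def indNorm {d : ℕ} (N : (Fin d → ℂ) → ℝ) (M : Matrix (Fin d) (Fin d) ℂ) : ℝ :=
  sSup {c | ∃ v, N v = 1 ∧ c = N (M.mulVec v)}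

/-- `A` is relatively product bounded. -/
def RelPB {I : Type*} {d : ℕ} (A : I → Matrix (Fin d) (Fin d) ℂ) : Prop :=
  ∃ C > 1, ∀ n : ℕ, 1 ≤ n → ∀ x : ℕ → I, ‖coc A x n‖ ≤ C * jsr A ^ n

/-- The point `x` is strongly extremal for `A`. -/
def StrongExt {I : Type*} {d : ℕ} (A : I → Matrix (Fin d) (Fin d) ℂ) (x : ℕ → I) : Prop :=
  ∃ ε > 0, ∀ n : ℕ, 1 ≤ n → ε * jsr A ^ n ≤ ‖coc A x n‖

/-- The point `x` is weakly extremal for `A`. -/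
def WeakExt {I : Type*} {d : ℕ} (A : I → Matrix (Fin d) (Fin d) ℂ) (x : ℕ → I) : Prop :=
  Tendsto (fun n : ℕ => ‖coc A x n‖ ^ ((n : ℝ)⁻¹)) atTop (𝓝 (jsr A))

/-- `(A1, A2, B, M)` is an upper triangularisation of the family `A`, with respect to the
decomposition `d = k + m`. -/
def UpperTri {I : Type*} {d k m : ℕ} (A : I → Matrix (Fin d) (Fin d) ℂ) (hd : d = k + m)
    (A1 : I → Matrix (Fin k) (Fin k) ℂ) (A2 : I → Matrix (Fin m) (Fin m) ℂ)
    (B : I → Matrix (Fin k) (Fin m) ℂ) (M : Matrix (Fin d) (Fin d) ℂ) : Prop :=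
  IsUnit M ∧ ∀ i : I,
    Matrix.reindex ((finCongr hd).trans finSumFinEquiv.symm)
        ((finCongr hd).trans finSumFinEquiv.symm) (M⁻¹ * A i * M)
      = Matrix.fromBlocks (A1 i) (B i) 0 (A2 i)


/-!
Compactness and upper semicontinuity turn a pointwise gap into a uniform one: if every point of a
compact set `K` has some `m ≥ 1` with `f m / m < b`, then there are `M` and a real `a < b` such
that every point of a neighbourhood of `K` starts a block of length at most `M` on which `f` grows
at rate at most `a`. Along an orbit staying in that neighbourhood, subadditivity over a cutting
into such blocks gives `f n ≤ n a + C`.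

For `K = X` this is Fekete's lemma for `sup_x f n x / n`. Zorn's lemma gives a minimal closed
`T`-invariant set `K` on which every `f n / n` still reaches `β̃`; the uniform bound on `K` yields
`z ∈ K` with `f m z / m ≥ β̃` for all `m`, and the same bound along the orbit of `z` shows that the
ω-limit set of `z` lies in the same family. By minimality it is `K`, so it contains `z`.
-/

open Set

section NormalizedValues

variable {n : ℕ} {e c : EReal}

theorem cE_mul_eq_div (n : ℕ) (e : EReal) : cE n * e = e / ((n : ℝ) : EReal) := by
  rw [cE, EReal.coe_inv, EReal.div_eq_inv_mul]

theorem cE_nonneg (n : ℕ) : 0 ≤ cE n :=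
  EReal.coe_nonneg.2 (by positivity)

private theorem natCast_ereal_pos (hn : 1 ≤ n) : (0 : EReal) < ((n : ℝ) : EReal) :=
  EReal.coe_pos.2 (by exact_mod_cast hn)

theorem cE_mul_le_iff (hn : 1 ≤ n) : cE n * e ≤ c ↔ e ≤ ((n : ℝ) : EReal) * c := by
  rw [cE_mul_eq_div, EReal.div_le_iff_le_mul (natCast_ereal_pos hn) (EReal.coe_ne_top _)]

theorem cE_mul_lt_iff (hn : 1 ≤ n) : cE n * e < c ↔ e < ((n : ℝ) : EReal) * c := by
  rw [cE_mul_eq_div, EReal.div_lt_iff (natCast_ereal_pos hn) (EReal.coe_ne_top _), mul_comm]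

theorem le_cE_mul_iff (hn : 1 ≤ n) : c ≤ cE n * e ↔ ((n : ℝ) : EReal) * c ≤ e := by
  rw [cE_mul_eq_div, EReal.le_div_iff_mul_le (natCast_ereal_pos hn) (EReal.coe_ne_top _),
    mul_comm]

theorem exists_lt_eventually_cE_mul_le {a : ℝ} {b : EReal} (hab : (a : EReal) < b) (C : ℝ) :
    ∃ c : ℝ, (c : EReal) < b ∧
      ∀ᶠ n : ℕ in atTop, ∀ e : EReal, e ≤ ((n * a + C : ℝ) : EReal) → cE n * e ≤ c := by
  obtain ⟨c, hac, hcb⟩ := EReal.lt_iff_exists_real_btwn.1 hab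
  have hgap : Tendsto (fun n : ℕ => (n : ℝ) * (c - a)) atTop atTop :=
    tendsto_natCast_atTop_atTop.atTop_mul_const (sub_pos.2 (EReal.coe_lt_coe_iff.1 hac))
  refine ⟨c, hcb, ?_⟩
  filter_upwards [hgap.eventually_ge_atTop C, eventually_ge_atTop 1] with n hCn hn e he
  rw [cE_mul_le_iff hn, ← EReal.coe_mul]
  exact he.trans (EReal.coe_le_coe_iff.2 (by linarith))

end NormalizedValues

theorem UpperSemicontinuous.exists_forall_le_coe {X : Type*} [TopologicalSpace X]
    [CompactSpace X] {g : X → EReal} (hg : UpperSemicontinuous g) (htop : ∀ x, g x ≠ ⊤) :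
    ∃ C : ℝ, ∀ x, g x ≤ C := by
  rcases isEmpty_or_nonempty X with hX | hX
  · exact ⟨0, fun x => isEmptyElim x⟩
  obtain ⟨x₀, -, hmax⟩ :=
    (hg.upperSemicontinuousOn univ).exists_isMaxOn univ_nonempty isCompact_univ
  obtain ⟨C, hC, -⟩ := EReal.lt_iff_exists_real_btwn.1 (lt_top_iff_ne_top.2 (htop x₀))
  exact ⟨C, fun x => (hmax (mem_univ x)).trans hC.le⟩

def IsSubadditiveSeq {X : Type*} (T : X → X) (f : ℕ → X → EReal) : Prop :=
  ∀ n m : ℕ, 1 ≤ n → 1 ≤ m → ∀ y : X, f (n + m) y ≤ f n (T^[m] y) + f m y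

namespace IsSubadditiveSeq

variable {X : Type*} {T : X → X} {f : ℕ → X → EReal} {C₁ : ℝ}

theorem le_mul_of_forall_le (hsub : IsSubadditiveSeq T f) {C : ℝ} (h1 : ∀ x, f 1 x ≤ C) :
    ∀ n, 1 ≤ n → ∀ x, f n x ≤ ((n * C : ℝ) : EReal) := by
  intro n hn
  induction n, hn using Nat.le_induction with
  | base => simpa using h1
  | succ n hn ih =>
    intro x
    calc f (n + 1) x ≤ f n (T^[1] x) + f 1 x := hsub n 1 hn le_rfl x
      _ ≤ ((n * C : ℝ) : EReal) + (C : EReal) := add_le_add (ih _) (h1 x)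
      _ = (((n + 1 : ℕ) : ℝ) * C : ℝ) := by
        rw [← EReal.coe_add]; congr 1; push_cast; ring

theorem le_mul_add_of_forall_iterate_mem (hsub : IsSubadditiveSeq T f)
    (h1 : ∀ x, f 1 x ≤ C₁) {V : Set X} {M : ℕ} {a : ℝ}
    (hV : ∀ y ∈ V, ∃ m, 1 ≤ m ∧ m ≤ M ∧ f m y ≤ ((m * a : ℝ) : EReal)) :
    ∃ C : ℝ, ∀ n, 1 ≤ n → ∀ y, (∀ j, T^[j] y ∈ V) → f n y ≤ ((n * a + C : ℝ) : EReal) := by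
  refine ⟨M * |C₁ - a|, fun n => ?_⟩
  induction n using Nat.strong_induction_on with
  | _ n ih =>
    intro hn y hy
    by_cases hnM : n ≤ M
    · refine (hsub.le_mul_of_forall_le h1 n hn y).trans (EReal.coe_le_coe_iff.2 ?_)
      have hnM' : (n : ℝ) ≤ M := by exact_mod_cast hnM
      have : (n : ℝ) * (C₁ - a) ≤ M * |C₁ - a| := by
        nlinarith [le_abs_self (C₁ - a), abs_nonneg (C₁ - a), (Nat.cast_nonneg n : (0 : ℝ) ≤ n)]
      linarith
    · obtain ⟨m, hm, hmM, hfm⟩ := hV y (hy 0)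
      have hrest := ih (n - m) (by omega) (by omega) (T^[m] y) fun j => by
        rw [← Function.iterate_add_apply]; exact hy _
      calc f n y = f (n - m + m) y := by rw [Nat.sub_add_cancel (by omega)]
        _ ≤ f (n - m) (T^[m] y) + f m y := hsub _ _ (by omega) hm y
        _ ≤ (((n - m : ℕ) : ℝ) * a + M * |C₁ - a| : ℝ) + ((m * a : ℝ) : EReal) :=
          add_le_add hrest hfm
        _ = ((n * a + M * |C₁ - a| : ℝ) : EReal) := by
          rw [← EReal.coe_add, Nat.cast_sub (by omega)]; ring_nf

theorem le_mul_add_of_eventually_iterate_mem (hsub : IsSubadditiveSeq T f)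
    (h1 : ∀ x, f 1 x ≤ C₁) {V : Set X} {M : ℕ} {a : ℝ}
    (hV : ∀ y ∈ V, ∃ m, 1 ≤ m ∧ m ≤ M ∧ f m y ≤ ((m * a : ℝ) : EReal)) {y : X}
    (hy : ∀ᶠ j in atTop, T^[j] y ∈ V) :
    ∃ C : ℝ, ∀ᶠ n in atTop, f n y ≤ ((n * a + C : ℝ) : EReal) := by
  obtain ⟨N, hN⟩ := eventually_atTop.1 hy
  obtain ⟨C, hC⟩ := hsub.le_mul_add_of_forall_iterate_mem h1 hV
  have htail : ∀ j, T^[j] (T^[N + 1] y) ∈ V := fun j => by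
    rw [← Function.iterate_add_apply]; exact hN _ (by omega)
  refine ⟨C + (N + 1) * (C₁ - a), ?_⟩
  filter_upwards [eventually_ge_atTop (N + 2)] with n hn
  calc f n y = f (n - (N + 1) + (N + 1)) y := by rw [Nat.sub_add_cancel (by omega)]
    _ ≤ f (n - (N + 1)) (T^[N + 1] y) + f (N + 1) y := hsub _ _ (by omega) (by omega) y
    _ ≤ (((n - (N + 1) : ℕ) : ℝ) * a + C : ℝ) + (((N + 1 : ℕ) : ℝ) * C₁ : ℝ) :=
      add_le_add (hC _ (by omega) _ htail) (hsub.le_mul_of_forall_le h1 _ (by omega) y)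
    _ = ((n * a + (C + (N + 1) * (C₁ - a)) : ℝ) : EReal) := by
      rw [← EReal.coe_add, Nat.cast_sub (by omega)]; congr 1; push_cast; ring

end IsSubadditiveSeq

theorem exists_isOpen_forall_exists_le_mul {X : Type*} [TopologicalSpace X]
    {f : ℕ → X → EReal} (husc : ∀ n, 1 ≤ n → UpperSemicontinuous (f n)) {K : Set X}
    (hK : IsCompact K) (hKne : K.Nonempty) {b : EReal}
    (h : ∀ y ∈ K, ∃ m, 1 ≤ m ∧ cE m * f m y < b) :
    ∃ (M : ℕ) (a : ℝ), (a : EReal) < b ∧ ∃ V, IsOpen V ∧ K ⊆ V ∧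
      ∀ y ∈ V, ∃ m, 1 ≤ m ∧ m ≤ M ∧ f m y ≤ ((m * a : ℝ) : EReal) := by
  have hpt : ∀ y : K, ∃ m, 1 ≤ m ∧ ∃ a : ℝ, cE m * f m y < a ∧ (a : EReal) < b := fun y =>
    (h y y.2).imp fun m ⟨hm, hlt⟩ => ⟨hm, EReal.lt_iff_exists_real_btwn.1 hlt⟩
  choose m hm a hfa hab using hpt
  set U : K → Set X := fun y => f (m y) ⁻¹' Iio ((m y * a y : ℝ) : EReal)
  have hU : ∀ y, IsOpen (U y) := fun y => (husc _ (hm y)).isOpen_preimage _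
  have hKU : K ⊆ ⋃ y, U y := fun y hy => mem_iUnion.2
    ⟨⟨y, hy⟩, by simpa [U, EReal.coe_mul] using (cE_mul_lt_iff (hm _)).1 (hfa ⟨y, hy⟩)⟩
  obtain ⟨t, ht⟩ := hK.elim_finite_subcover U hU hKU
  have htne : t.Nonempty := by
    obtain ⟨i, hi, -⟩ := mem_iUnion₂.1 (ht hKne.some_mem)
    exact ⟨i, hi⟩
  obtain ⟨i₀, -, hi₀⟩ := t.exists_max_image a htne
  refine ⟨t.sup m, a i₀, hab i₀, ⋃ i ∈ t, U i, isOpen_biUnion fun i _ => hU i, ht, ?_⟩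
  intro y hy
  obtain ⟨i, hi, hyi⟩ := mem_iUnion₂.1 hy
  refine ⟨m i, hm i, Finset.le_sup hi, le_of_lt (hyi.trans_le (EReal.coe_le_coe_iff.2 ?_))⟩
  exact mul_le_mul_of_nonneg_left (hi₀ i hi) (Nat.cast_nonneg _)

theorem mapsTo_omegaLimit_iterate_succ {X : Type*} [TopologicalSpace X] {T : X → X}
    (hT : Continuous T) (s : Set X) :
    MapsTo T (omegaLimit atTop (fun k x => T^[k + 1] x) s)
      (omegaLimit atTop (fun k x => T^[k + 1] x) s) := by
  have hshift := omegaLimit_subset_of_tendsto (fun k x => T^[k + 1] x) s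
    (tendsto_add_atTop_nat 1)
  refine (mapsTo_omegaLimit s (mapsTo_id s) (gb := T) (fun k x => ?_) hT).mono_right hshift
  exact (Function.iterate_succ_apply' T (k + 1) x).symm

theorem IsChain.nonempty_sInter_inter {X : Type*} [TopologicalSpace X] [CompactSpace X]
    {c : Set (Set X)} (hc : IsChain (· ⊆ ·) c) (hne : c.Nonempty) (hcl : ∀ K ∈ c, IsClosed K)
    {G : Set X} (hG : IsClosed G) (hmeet : ∀ K ∈ c, (K ∩ G).Nonempty) : (⋂₀ c ∩ G).Nonempty := by
  have : Nonempty c := hne.to_subtype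
  have hdir : Directed (· ⊇ ·) fun K : c => (K : Set X) ∩ G := fun K₁ K₂ => by
    rcases hc.total K₁.2 K₂.2 with h | h
    · exact ⟨K₁, subset_rfl, inter_subset_inter_left G h⟩
    · exact ⟨K₂, inter_subset_inter_left G h, subset_rfl⟩
  have := IsCompact.nonempty_iInter_of_directed_nonempty_isCompact_isClosed _ hdir
    (fun K => hmeet K K.2) (fun K => ((hcl K K.2).inter hG).isCompact)
    (fun K => (hcl K K.2).inter hG)
  rwa [← iInter_inter, ← sInter_eq_iInter] at this

namespace IsSubadditiveSeq

variable {X : Type*} [TopologicalSpace X] {T : X → X} {f : ℕ → X → EReal} {C₁ : ℝ}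

theorem eventually_forall_cE_mul_le (hsub : IsSubadditiveSeq T f)
    (husc : ∀ n, 1 ≤ n → UpperSemicontinuous (f n)) (h1 : ∀ x, f 1 x ≤ C₁) {K : Set X}
    (hK : IsCompact K) (hKne : K.Nonempty) (hKT : MapsTo T K K) {b : EReal}
    (h : ∀ y ∈ K, ∃ m, 1 ≤ m ∧ cE m * f m y < b) :
    ∃ c : ℝ, (c : EReal) < b ∧ ∀ᶠ n in atTop, ∀ y ∈ K, cE n * f n y ≤ c := by
  obtain ⟨M, a, hab, V, -, hKV, hV⟩ := exists_isOpen_forall_exists_le_mul husc hK hKne h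
  obtain ⟨C, hC⟩ := hsub.le_mul_add_of_forall_iterate_mem h1 hV
  obtain ⟨c, hcb, hev⟩ := exists_lt_eventually_cE_mul_le hab C
  refine ⟨c, hcb, ?_⟩
  filter_upwards [hev, eventually_ge_atTop 1] with n hn hn1 y hy
  exact hn _ (hC n hn1 y fun j => hKV (hKT.iterate j hy))

theorem tendsto_iSup_cE_mul [CompactSpace X] [Nonempty X] (hsub : IsSubadditiveSeq T f)
    (husc : ∀ n, 1 ≤ n → UpperSemicontinuous (f n)) (h1 : ∀ x, f 1 x ≤ C₁) :
    Tendsto (fun n : ℕ => ⨆ x, cE n * f n x) atTop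
      (𝓝 (⨅ n : ℕ+, ⨆ x, cE (n : ℕ) * f (n : ℕ) x)) := by
  refine tendsto_order.2 ⟨fun b hb => ?_, fun b hb => ?_⟩
  · filter_upwards [eventually_ge_atTop 1] with n hn
    exact hb.trans_le (iInf_le (fun k : ℕ+ => ⨆ x, cE (k : ℕ) * f (k : ℕ) x) ⟨n, hn⟩)
  · obtain ⟨N, hN⟩ := iInf_lt_iff.1 hb
    obtain ⟨c, hcb, hev⟩ := hsub.eventually_forall_cE_mul_le husc h1 isCompact_univ
      univ_nonempty (mapsTo_univ T univ) fun y _ => ⟨N, N.pos, (le_iSup _ y).trans_lt hN⟩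
    filter_upwards [hev] with n hn
    exact (iSup_le fun y => hn y (mem_univ y)).trans_lt hcb

theorem exists_forall_le_cE_mul (hsub : IsSubadditiveSeq T f)
    (husc : ∀ n, 1 ≤ n → UpperSemicontinuous (f n)) (h1 : ∀ x, f 1 x ≤ C₁) {K : Set X}
    (hK : IsCompact K) (hKT : MapsTo T K K) {β : EReal}
    (hKβ : ∀ n, 1 ≤ n → ∃ x ∈ K, β ≤ cE n * f n x) :
    ∃ z ∈ K, ∀ m, 1 ≤ m → β ≤ cE m * f m z := by
  by_contra! hlt
  obtain ⟨x₀, hx₀, -⟩ := hKβ 1 le_rfl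
  obtain ⟨c, hcβ, hev⟩ := hsub.eventually_forall_cE_mul_le husc h1 hK ⟨x₀, hx₀⟩ hKT hlt
  obtain ⟨n, hn, hn1⟩ := (hev.and (eventually_ge_atTop 1)).exists
  obtain ⟨x, hx, hβx⟩ := hKβ n hn1
  exact hcβ.not_ge (hβx.trans (hn x hx))

theorem exists_mem_omegaLimit_le_cE_mul [CompactSpace X] (hsub : IsSubadditiveSeq T f)
    (husc : ∀ n, 1 ≤ n → UpperSemicontinuous (f n)) (h1 : ∀ x, f 1 x ≤ C₁) {β : EReal}
    {z : X} (hz : ∀ m, 1 ≤ m → β ≤ cE m * f m z) (n : ℕ) (hn : 1 ≤ n) :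
    ∃ y ∈ omegaLimit atTop (fun k x => T^[k + 1] x) {z}, β ≤ cE n * f n y := by
  by_contra! hlt
  obtain ⟨M, a, haβ, V, hVo, hΩV, hV⟩ := exists_isOpen_forall_exists_le_mul husc
    (isClosed_omegaLimit _ _ _).isCompact (nonempty_omegaLimit _ _ _ (singleton_nonempty z))
    fun y hy => ⟨n, hn, hlt y hy⟩
  have horbit : ∀ᶠ j in atTop, T^[j] z ∈ V := by
    filter_upwards [(tendsto_sub_atTop_nat 1).eventually
      (eventually_mapsTo_of_isOpen_of_omegaLimit_subset _ _ _ hVo hΩV), eventually_ge_atTop 1]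
      with j hj hj1
    simpa [Nat.sub_add_cancel hj1] using hj (mem_singleton z)
  obtain ⟨C, hC⟩ := hsub.le_mul_add_of_eventually_iterate_mem h1 hV horbit
  obtain ⟨c, hcβ, hev⟩ := exists_lt_eventually_cE_mul_le haβ C
  obtain ⟨m, hm, hmC, hm1⟩ := (hev.and (hC.and (eventually_ge_atTop 1))).exists
  exact hcβ.not_ge ((hz m hm1).trans (hm _ hmC))

theorem exists_recurrent_forall_le_cE_mul [CompactSpace X] (hT : Continuous T)
    (hsub : IsSubadditiveSeq T f) (husc : ∀ n, 1 ≤ n → UpperSemicontinuous (f n))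
    (h1 : ∀ x, f 1 x ≤ C₁) {β : EReal} (hβ : ∀ n, 1 ≤ n → ∃ x, β ≤ cE n * f n x) :
    ∃ z, MapClusterPt z atTop (fun n => T^[n + 1] z) ∧ ∀ m, 1 ≤ m → β ≤ cE m * f m z := by
  set S : Set (Set X) :=
    {K | IsClosed K ∧ MapsTo T K K ∧ ∀ n, 1 ≤ n → ∃ x ∈ K, β ≤ cE n * f n x}
  have hclosed_superlevel : ∀ n, 1 ≤ n → IsClosed {x | β ≤ cE n * f n x} := fun n hn => by
    simp_rw [le_cE_mul_iff hn]; exact (husc n hn).isClosed_preimage _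
  have hchain : ∀ c ⊆ S, IsChain (· ⊆ ·) c → c.Nonempty → ∃ lb ∈ S, ∀ K ∈ c, lb ⊆ K := by
    intro c hcS hc hne
    refine ⟨⋂₀ c, ⟨isClosed_sInter fun K hK => (hcS hK).1, fun x hx => ?_, fun n hn => ?_⟩,
      fun K hK => sInter_subset_of_mem hK⟩
    · exact mem_sInter.2 fun K hK => (hcS hK).2.1 (mem_sInter.1 hx K hK)
    · exact hc.nonempty_sInter_inter hne (fun K hK => (hcS hK).1) (hclosed_superlevel n hn)
        fun K hK => (hcS hK).2.2 n hn
  obtain ⟨K, -, hKmin⟩ := zorn_superset_nonempty S hchain univ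
    ⟨isClosed_univ, mapsTo_univ T univ, fun n hn => (hβ n hn).imp fun x hx => ⟨mem_univ x, hx⟩⟩
  obtain ⟨hKcl, hKT, hKβ⟩ := hKmin.prop
  obtain ⟨z, hzK, hz⟩ := hsub.exists_forall_le_cE_mul husc h1 hKcl.isCompact hKT hKβ
  set Ω := omegaLimit atTop (fun k x => T^[k + 1] x) {z}
  have hΩK : Ω ⊆ K := (omegaLimit_subset_closure_image2 _ _ _ univ_mem).trans <|
    closure_minimal (image2_subset_iff.2 fun k _ x hx => hx ▸ hKT.iterate (k + 1) hzK) hKcl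
  have hΩS : Ω ∈ S := ⟨isClosed_omegaLimit _ _ _, mapsTo_omegaLimit_iterate_succ hT _,
    hsub.exists_mem_omegaLimit_le_cE_mul husc h1 hz⟩
  exact ⟨z, (mem_omegaLimit_singleton_iff_mapClusterPt _ _ _ _).1 (hKmin.le_of_le hΩS hΩK hzK), hz⟩

end IsSubadditiveSeq

/-- Proposition A.7 and its corollary in the paper, generalising a lemma of
Y. Peres: there is a point — which may moreover be taken recurrent — all of whose subadditive
averages are at least `β̃[(f_n)] = lim_n sup_x (1/n) f_n(x)`.  (By Fekete's subadditivity
lemma this limit exists and equals the corresponding infimum over `n ≥ 1`, as recorded by the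
first conjunct.) -/
theorem stmt19 {X : Type*} [MetricSpace X] [CompactSpace X] [Nonempty X]
    (T : X → X) (hT : Continuous T)
    (f : ℕ → X → EReal)
    (husc : ∀ n : ℕ, 1 ≤ n → UpperSemicontinuous (f n))
    (hntop : ∀ (n : ℕ) (y : X), 1 ≤ n → f n y ≠ ⊤)
    (hsub : ∀ n m : ℕ, 1 ≤ n → 1 ≤ m → ∀ y : X, f (n + m) y ≤ f n (T^[m] y) + f m y) :
    Tendsto (fun n : ℕ => ⨆ x : X, cE n * f n x) atTop
      (𝓝 (⨅ n : ℕ+, ⨆ x : X, cE (n : ℕ) * f (n : ℕ) x)) ∧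
    ∃ z : X, MapClusterPt z atTop (fun n : ℕ => T^[n + 1] z) ∧
      (⨅ n : ℕ+, ⨆ x : X, cE (n : ℕ) * f (n : ℕ) x)
        ≤ ⨅ m : ℕ+, cE (m : ℕ) * f (m : ℕ) z := by
  have hsub : IsSubadditiveSeq T f := hsub
  obtain ⟨C₁, h1⟩ := (husc 1 le_rfl).exists_forall_le_coe fun x => hntop 1 x le_rfl
  refine ⟨hsub.tendsto_iSup_cE_mul husc h1, ?_⟩
  have hmax : ∀ n, 1 ≤ n →
      ∃ x, (⨅ k : ℕ+, ⨆ y : X, cE (k : ℕ) * f (k : ℕ) y) ≤ cE n * f n x := fun n hn => by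
    obtain ⟨x, -, hx⟩ :=
      ((husc n hn).upperSemicontinuousOn univ).exists_isMaxOn univ_nonempty isCompact_univ
    refine ⟨x, (iInf_le _ ⟨n, hn⟩).trans (iSup_le fun y => ?_)⟩
    exact mul_le_mul_of_nonneg_left (hx (mem_univ y)) (cE_nonneg n)
  obtain ⟨z, hrec, hz⟩ := hsub.exists_recurrent_forall_le_cE_mul hT husc h1 hmax
  exact ⟨z, hrec, le_iInf fun m => hz m m.pos⟩

end
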